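/- An MV-algebra A is an MV-chain (nontrivial with total order) if and only if A is nontrivial and for all x, y ∈ A, x ∧ y = 0 implies x = 0 or y = 0. -/

import Mathlib

/-!
Write `a = x ⊖ y`, `b = y ⊖ x` and `m = x ∧ y`. Then `m ⊕ a = x` and `m ⊕ b = y`, and since
`· ⊕ m` is the right adjoint of `· ⊖ m` it preserves meets, so `(a ∧ b) ⊕ m = x ∧ y = m`. As
moreover `a ≤ ¬m`, this forces `a ∧ b = 0`. Hence in every MV-algebra `(x ⊖ y) ∧ (y ⊖ x) = 0`,
which gives totality from the absence of zero divisors for `∧`; the converse is immediate.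
-/

/-- An MV-algebra: a set with ⊕ (written `+`), ¬ (written `-`) and `0`
satisfying the standard MV-algebra axioms. -/
class MVAlgebra (A : Type*) extends Add A, Neg A, Zero A where
  add_assoc : ∀ x y z : A, x + (y + z) = (x + y) + z
  add_comm : ∀ x y : A, x + y = y + x
  add_zero : ∀ x : A, x + 0 = x
  neg_neg : ∀ x : A, - -x = x
  add_neg_zero : ∀ x : A, x + -0 = -0
  luk : ∀ x y : A, -(-x + y) + y = -(-y + x) + x

namespace MVAlgebra

variable {A : Type*} [MVAlgebra A]

/-- The top element `1 = ¬0`. -/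
def one : A := -0

/-- Truncated difference `x ⊖ y = ¬(¬x ⊕ y)`. -/
def sub (x y : A) : A := -(-x + y)

/-- Supremum `x ∨ y = (x ⊖ y) ⊕ y`. -/
def sup (x y : A) : A := sub x y + y

/-- Infimum `x ∧ y = ¬(¬x ∨ ¬y)`. -/
def inf (x y : A) : A := -(sup (-x) (-y))

/-- The natural order: `x ≤ y` iff `x ⊖ y = 0`. -/
def le (x y : A) : Prop := sub x y = 0

/-- `n • x = x ⊕ ⋯ ⊕ x` (`n` times). -/
def nsmul : ℕ → A → A
  | 0, _ => 0
  | n + 1, x => nsmul n x + x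

/-- The distance `d(x,y) = (x ⊖ y) ⊕ (y ⊖ x)`. -/
def d (x y : A) : A := sub x y + sub y x

/-- Ideals: contain `0`, downward closed, closed under `⊕`. -/
def IsIdeal (I : Set A) : Prop :=
  (0 : A) ∈ I ∧ (∀ x y : A, x ∈ I → le y x → y ∈ I) ∧
    (∀ x y : A, x ∈ I → y ∈ I → x + y ∈ I)

/-- Prime ideals: proper ideals with `x ⊖ y ∈ P` or `y ⊖ x ∈ P` for all `x, y`. -/
def IsPrime (P : Set A) : Prop :=
  IsIdeal P ∧ P ≠ Set.univ ∧ ∀ x y : A, sub x y ∈ P ∨ sub y x ∈ P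

/-- The principal ideal `(a) = {x | x ≤ n·a for some n}`. -/
def princ (a : A) : Set A := {x : A | ∃ n : ℕ, le x (nsmul n a)}

end MVAlgebra

namespace MVAlgebra

variable {A : Type*} [MVAlgebra A]

theorem zero_add (x : A) : 0 + x = x := by rw [add_comm, add_zero]

theorem add_left_comm (x y z : A) : x + (y + z) = y + (x + z) := by
  rw [add_assoc, add_comm x y, ← add_assoc]

theorem neg_add_self (x : A) : -x + x = -0 := by
  have h := luk x (-0)
  rw [add_neg_zero, neg_neg, zero_add] at h
  exact h.symm

theorem sub_self (x : A) : sub x x = 0 := by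
  rw [sub, neg_add_self, neg_neg]

theorem le_iff_neg_add_eq (x y : A) : le x y ↔ -x + y = -0 := by
  rw [le, sub]
  exact ⟨fun h => by rw [← h, neg_neg], fun h => by rw [h, neg_neg]⟩

theorem sub_add_cancel_of_le {x y : A} (h : le x y) : sub y x + x = y := by
  rw [sub, luk, show -(-x + y) = 0 from h, zero_add]

instance : PartialOrder A where
  le := le
  le_refl x := sub_self x
  le_trans u v w huv hvw := by
    rw [le_iff_neg_add_eq] at huv ⊢
    rw [← sub_add_cancel_of_le hvw, add_left_comm, huv, add_neg_zero]
  le_antisymm x y hxy hyx := by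
    have h := luk x y
    rwa [show -(-x + y) = 0 from hxy, show -(-y + x) = 0 from hyx, zero_add, zero_add,
      eq_comm] at h

theorem le_add_left (x s : A) : x ≤ s + x := by
  change le _ _
  rw [le_iff_neg_add_eq, add_left_comm, neg_add_self, add_neg_zero]

theorem neg_le_neg {x y : A} (h : x ≤ y) : -y ≤ -x := by
  change sub _ _ = 0
  rwa [sub, neg_neg, add_comm]

theorem add_le_add_right {x y : A} (h : x ≤ y) (z : A) : x + z ≤ y + z := by
  change le _ _ at h ⊢
  rw [le_iff_neg_add_eq] at h ⊢
  have e : -(x + z) + z = sub z (-x) + -x := by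
    simpa only [sub, neg_neg] using luk (-x) z
  rw [add_comm y z, add_assoc, e, ← add_assoc, h, add_neg_zero]

theorem sub_le_sub_right {x y : A} (h : x ≤ y) (z : A) : sub x z ≤ sub y z :=
  neg_le_neg (add_le_add_right (neg_le_neg h) z)

theorem sub_le_self (x y : A) : sub x y ≤ x := by
  change le _ _
  rw [le_iff_neg_add_eq, sub, neg_neg, add_comm (-x) y, ← add_assoc, neg_add_self,
    add_neg_zero]

instance : SemilatticeSup A where
  sup := sup
  le_sup_left x y := by
    change le _ _
    rw [le_iff_neg_add_eq, sup, sub, add_left_comm, neg_add_self]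
  le_sup_right x y := le_add_left y (sub x y)
  sup_le x y z hxz hyz :=
    calc sub x y + y ≤ sub z y + y := add_le_add_right (sub_le_sub_right hxz y) y
      _ = z := sub_add_cancel_of_le hyz

instance : Lattice A where
  inf := inf
  inf_le_left x y := by
    have h := neg_le_neg (le_sup_left : -x ≤ -x ⊔ -y)
    rwa [neg_neg] at h
  inf_le_right x y := by
    have h := neg_le_neg (le_sup_right : -y ≤ -x ⊔ -y)
    rwa [neg_neg] at h
  le_inf x y z hzx hzy := by
    have h := neg_le_neg (sup_le (neg_le_neg hzx) (neg_le_neg hzy))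
    rwa [neg_neg] at h

theorem add_sub_right_eq_inf (x y : A) : sub (x + y) y = x ⊓ -y := by
  change _ = -(sub (-x) (- -y) + - -y)
  rw [sub, sub, neg_neg, neg_neg]

theorem sub_sub_self (x y : A) : sub x (sub x y) = x ⊓ y := by
  rw [inf_comm]
  change _ = -(sub (-y) (-x) + -x)
  rw [sub, sub, sub, neg_neg, add_comm (-x) (-(-x + y)), add_comm (-x) y]

theorem inf_add_sub (x y : A) : x ⊓ y + sub x y = x := by
  rw [← sub_sub_self]
  exact sup_eq_left.mpr (sub_le_self x y)

theorem gc_sub_add (t : A) : GaloisConnection (sub · t) (· + t) := fun _ w =>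
  ⟨fun h => le_sup_left.trans (add_le_add_right h t),
    fun h => (sub_le_sub_right h t).trans ((add_sub_right_eq_inf w t).le.trans inf_le_left)⟩

theorem inf_add (x y z : A) : x ⊓ y + z = (x + z) ⊓ (y + z) :=
  (gc_sub_add z).u_inf

theorem eq_zero_of_add_eq_self {c m : A} (hc : c ≤ -m) (h : c + m = m) : c = 0 :=
  calc c = c ⊓ -m := (inf_eq_left.mpr hc).symm
    _ = sub (c + m) m := (add_sub_right_eq_inf c m).symm
    _ = 0 := by rw [h, sub_self]

theorem sub_inf_sub (x y : A) : sub x y ⊓ sub y x = 0 := by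
  have hx : sub x y + x ⊓ y = x := by rw [add_comm]; exact inf_add_sub x y
  have hy : sub y x + x ⊓ y = y := by rw [add_comm, inf_comm]; exact inf_add_sub y x
  have hle : sub x y ≤ -(x ⊓ y) := by
    simpa only [sub, neg_neg] using neg_le_neg (inf_le_right.trans (le_add_left y (-x)))
  exact eq_zero_of_add_eq_self (inf_le_left.trans hle) (by rw [inf_add, hx, hy])

end MVAlgebra

open MVAlgebra in
/-- `A` is an MV-chain (nontrivial with total natural order) iff
`A` is nontrivial and `x ∧ y = 0` implies `x = 0` or `y = 0`. -/
theorem chain_iff_inf_zero {A : Type*} [MVAlgebra A] :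
    ((one : A) ≠ 0 ∧ ∀ x y : A, le x y ∨ le y x) ↔
      ((one : A) ≠ 0 ∧ ∀ x y : A, inf x y = 0 → x = 0 ∨ y = 0) := by
  refine and_congr_right fun _ => ⟨fun total x y h => ?_, fun h x y => h _ _ (sub_inf_sub x y)⟩
  rcases total x y with hxy | hyx
  · exact Or.inl ((inf_eq_left.mpr hxy).symm.trans h)
  · exact Or.inr ((inf_eq_right.mpr hyx).symm.trans h)
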